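/- arXiv:2208.04527 — 2 statements merged into one kernel-verified Lean document; each statement's English description precedes it below -/
import Mathlib

section
/- Vertical recurrence relation: for nonnegative integers n and k with n ≥ k, W*_{m,r}[n+1, k+1; t]_{p,q} = Σ_{j=k}^{n} [m(k+1)+r]_{p,q}^{n-j} · p^{(n-j)(mt-(k+1)m)} · W*_{m,r}[j,k;t]_{p,q}. -/
open Finset

/-- `p` as an indeterminate in `ℤ[p,q]`. -/
noncomputable def P : MvPolynomial (Fin 2) ℤ := MvPolynomial.X 0

/-- `q` as an indeterminate in `ℤ[p,q]`. -/
noncomputable def Q : MvPolynomial (Fin 2) ℤ := MvPolynomial.X 1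

/-- The (p,q)-number `[s]_{p,q} = Σ_{i=0}^{s-1} p^{s-1-i} q^i`. -/
noncomputable def pqNum (s : ℕ) : MvPolynomial (Fin 2) ℤ :=
  ∑ i ∈ Finset.range s, P ^ (s - 1 - i) * Q ^ i

/-- Second form of the type 2 (p,q)-analogue of the r-Whitney numbers of the
second kind, `W*_{m,r}[n,k;t]_{p,q}`. -/
noncomputable def Wstar (m r t : ℕ) : ℕ → ℕ → MvPolynomial (Fin 2) ℤ
  | 0, 0 => 1
  | 0, _ + 1 => 0
  | n + 1, 0 => pqNum r * P ^ (m * t) * Wstar m r t n 0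
  | n + 1, k + 1 =>
      Wstar m r t n k +
        pqNum (m * (k + 1) + r) * P ^ (m * (t - (k + 1))) * Wstar m r t n (k + 1)

lemma Wstar_eq_zero (m r t : ℕ) : ∀ n k : ℕ, n < k → Wstar m r t n k = 0 := by
  intro n
  induction n with
  | zero =>
    intro k hk
    match k, hk with
    | k + 1, _ => rfl
  | succ n ih =>
    intro k hk
    match k, hk with
    | k + 1, hk =>
      rw [Wstar, ih k (by omega), ih (k + 1) (by omega)]
      ring

theorem wstar_vertical_recurrence (m r t n k : ℕ) (hkn : k ≤ n) (ht : k + 1 ≤ t) :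
    Wstar m r t (n + 1) (k + 1) =
      ∑ j ∈ Finset.Icc k n,
        pqNum (m * (k + 1) + r) ^ (n - j) * P ^ ((n - j) * (m * t - (k + 1) * m)) *
          Wstar m r t j k := by
  have he : m * (t - (k + 1)) = m * t - (k + 1) * m := by
    rw [Nat.mul_sub]; ring_nf
  induction n with
  | zero =>
    have hk0 : k = 0 := Nat.le_zero.mp hkn
    subst hk0
    rw [Wstar, Wstar_eq_zero m r t 0 1 (by omega)]
    simp
  | succ n ih =>
    rcases Nat.eq_or_lt_of_le hkn with h | h
    · -- k = n + 1
      subst h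
      rw [Wstar, Wstar_eq_zero m r t (n + 1) (n + 1 + 1) (by omega),
        Finset.Icc_self, Finset.sum_singleton]
      simp
    · have hkn' : k ≤ n := by omega
      rw [Wstar, ih hkn', Finset.mul_sum,
        Finset.sum_Icc_succ_top (show k ≤ n + 1 by omega), Nat.sub_self, pow_zero,
        Nat.zero_mul, pow_zero, one_mul, one_mul, add_comm]
      congr 1
      apply Finset.sum_congr rfl
      intro j hj
      simp only [Finset.mem_Icc] at hj
      rw [he, show n + 1 - j = (n - j) + 1 by omega]
      ring
end

section
/- Rational generating function: as formal power series in x over the ring ℤ[p,q] (allowing negative powers of p, or assuming t large enough), Σ_{n≥k} W*_{m,r}[n,k;t]_{p,q} x^{n-k} = 1 / Π_{j=0}^{k} (1 - x · p^{m(t-j)} · [mj+r]_{p,q}), equivalently Π_{j=0}^{k} (1 - x p^{m(t-j)} [mj+r]_{p,q}) · Σ_{n≥k} W*_{m,r}[n,k;t]_{p,q} x^{n-k} = 1. -/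
/-!
Write `w_k = p^{m(t-k)} [mk+r]_{p,q}` and `F_k = ∑ₙ W*[n+k,k;t] xⁿ`. Read coefficientwise, the
recurrence says `(1 - w₀x) F₀ = 1` and `(1 - w_{k+1}x) F_{k+1} = F_k`, so multiplying `F_k` by
`∏_{j ≤ k} (1 - w_j x)` telescopes down to `1`.
-/

open Finset

theorem PowerSeries.one_sub_X_mul_C_mul_mk {R : Type*} [CommRing R] (c : R) {f g : ℕ → R}
    (h_zero : f 0 = g 0) (h_succ : ∀ n, f (n + 1) = g (n + 1) + c * f n) :
    (1 - X * C c) * mk f = mk g := by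
  ext (_ | n)
  · simp [h_zero]
  · rw [sub_mul, one_mul, map_sub, mul_assoc, coeff_succ_X_mul, coeff_C_mul]
    simp [h_succ]

namespace Wstar

variable (m r t : ℕ)

noncomputable def weight (k : ℕ) : MvPolynomial (Fin 2) ℤ :=
  P ^ (m * (t - k)) * pqNum (m * k + r)

theorem succ_zero (n : ℕ) : Wstar m r t (n + 1) 0 = weight m r t 0 * Wstar m r t n 0 := by
  rw [Wstar, weight, Nat.sub_zero, mul_zero, zero_add]
  ring

theorem succ_succ (n k : ℕ) :
    Wstar m r t (n + 1) (k + 1) =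
      Wstar m r t n k + weight m r t (k + 1) * Wstar m r t n (k + 1) := by
  rw [Wstar, weight]
  ring

theorem eq_zero_of_lt {n k : ℕ} (h : n < k) : Wstar m r t n k = 0 := by
  induction n generalizing k with
  | zero => obtain ⟨k, rfl⟩ := Nat.exists_eq_add_one_of_ne_zero h.ne'; rfl
  | succ n ih =>
    obtain ⟨k, rfl⟩ := Nat.exists_eq_add_one_of_ne_zero (Nat.ne_zero_of_lt h)
    rw [succ_succ, ih (by omega), ih (by omega), mul_zero, add_zero]

theorem self (n : ℕ) : Wstar m r t n n = 1 := by
  induction n with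
  | zero => rfl
  | succ n ih => rw [succ_succ, ih, eq_zero_of_lt m r t n.lt_succ_self, mul_zero, add_zero]

open PowerSeries

theorem one_sub_X_mul_C_weight_zero_mul_mk :
    (1 - X * C (weight m r t 0)) * PowerSeries.mk (fun n => Wstar m r t n 0) = 1 := by
  have h_one : PowerSeries.mk (Pi.single 0 1) = (1 : PowerSeries (MvPolynomial (Fin 2) ℤ)) := by
    ext n
    simp [coeff_one, Pi.single_apply]
  refine (one_sub_X_mul_C_mul_mk _ ?_ fun n => ?_).trans h_one
  · rw [Pi.single_eq_same]
    rfl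
  · rw [succ_zero, Pi.single_eq_of_ne n.succ_ne_zero, zero_add]

theorem one_sub_X_mul_C_weight_succ_mul_mk (k : ℕ) :
    (1 - X * C (weight m r t (k + 1))) *
        PowerSeries.mk (fun n => Wstar m r t (n + (k + 1)) (k + 1)) =
      PowerSeries.mk (fun n => Wstar m r t (n + k) k) := by
  refine one_sub_X_mul_C_mul_mk _ (by simp only [zero_add, self]) fun n => ?_
  rw [show n + 1 + (k + 1) = n + 1 + k + 1 by omega, succ_succ, ← add_assoc n k 1,
    Nat.add_right_comm n 1 k]

end Wstar

theorem wstar_rational_generating_function_general (m r t k : ℕ) :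
    (∏ j ∈ Finset.range (k + 1),
        (1 - PowerSeries.X * PowerSeries.C (R := MvPolynomial (Fin 2) ℤ)
              (P ^ (m * (t - j)) * pqNum (m * j + r)))) *
      PowerSeries.mk (fun n => Wstar m r t (n + k) k) = 1 := by
  change (∏ j ∈ range (k + 1), (1 - PowerSeries.X * PowerSeries.C (Wstar.weight m r t j))) *
    PowerSeries.mk (fun n => Wstar m r t (n + k) k) = 1
  induction k with
  | zero => simpa using Wstar.one_sub_X_mul_C_weight_zero_mul_mk m r t
  | succ k ih =>
    rw [prod_range_succ, mul_assoc, Wstar.one_sub_X_mul_C_weight_succ_mul_mk, ih]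

theorem wstar_rational_generating_function (m r t k : ℕ) (ht : k ≤ t) :
    (∏ j ∈ Finset.range (k + 1),
        (1 - PowerSeries.X * PowerSeries.C (R := MvPolynomial (Fin 2) ℤ)
              (P ^ (m * (t - j)) * pqNum (m * j + r)))) *
      PowerSeries.mk (fun n => Wstar m r t (n + k) k) = 1 :=
  wstar_rational_generating_function_general m r t k
end
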